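/- Suppose the pair (T, G^{(1)}) is pointwise of weak Lie type. Let z ∈ M with d := ord(z) < ∞ and let N ≥ 0. If for every k ≥ 1 the closure of the orbit G^{(k)}z contains {z} + M_{N+k+d}, then for every k > N the closure of T^{(k)}(z) contains M_{N+k+d}. -/

import Mathlib

/-!
Given `w ∈ M_{N+k+d}`, approximate `z + w` by some `u z` with `u ∈ G^{(k)}` to order `2k + d`;
condition (b) of weak Lie type replaces `(u - 1) z` by `ξ z` with `ξ ∈ T^{(k)}`, at the same
order. Since `k > N`, the residual lies in `M_{N+k'+d}` for some `k' > k`, so the step can be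
repeated; the sum of the `ξ`s approximates `w` by elements of `T^{(k)}(z)` to any order.
-/

variable {𝕜 M : Type*} [CommRing 𝕜] [AddCommGroup M] [Module 𝕜 M]

/-- `End^{(i)}` : the 𝕜-submodule of endomorphisms shifting the filtration by `i`. -/
def EndS (Mf : ℕ → Submodule 𝕜 M) (i : ℕ) : Submodule 𝕜 (Module.End 𝕜 M) where
  carrier := {φ | ∀ j : ℕ, ∀ x ∈ Mf j, φ x ∈ Mf (j + i)}
  add_mem' := by
    intro a b ha hb j x hx
    simpa [LinearMap.add_apply] using add_mem (ha j x hx) (hb j x hx)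
  zero_mem' := by
    intro j x hx
    simpa using (Mf (j + i)).zero_mem
  smul_mem' := by
    intro c a ha j x hx
    simpa [LinearMap.smul_apply] using Submodule.smul_mem _ c (ha j x hx)

/-- `GL^{(i)}` (for `i ≥ 1`): units `u` such that `u` and `u⁻¹` preserve the filtration
and `u - 1`, `u⁻¹ - 1` lie in `End^{(i)}`. -/
def GLFil (Mf : ℕ → Submodule 𝕜 M) (i : ℕ) : Set (Module.End 𝕜 M)ˣ :=
  {u | (∀ j : ℕ, ∀ x ∈ Mf j, (u : Module.End 𝕜 M) x ∈ Mf j) ∧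
    (∀ j : ℕ, ∀ x ∈ Mf j, ((u⁻¹ : (Module.End 𝕜 M)ˣ) : Module.End 𝕜 M) x ∈ Mf j) ∧
    ((u : Module.End 𝕜 M) - 1) ∈ EndS Mf i ∧
    (((u⁻¹ : (Module.End 𝕜 M)ˣ) : Module.End 𝕜 M) - 1) ∈ EndS Mf i}

/-- `ord(z) = sup {j : z ∈ M_j} ∈ ℕ ∪ {∞}`. -/
noncomputable def ordM (Mf : ℕ → Submodule 𝕜 M) (z : M) : ℕ∞ :=
  ⨆ j ∈ {j : ℕ | z ∈ Mf j}, (j : ℕ∞)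

/-- `ord(φ) = sup {i : φ ∈ End^{(i)}} ∈ ℕ ∪ {∞}`. -/
noncomputable def ordE (Mf : ℕ → Submodule 𝕜 M) (φ : Module.End 𝕜 M) : ℕ∞ :=
  ⨆ i ∈ {i : ℕ | φ ∈ EndS Mf i}, (i : ℕ∞)

/-- Closure of a subset in the filtration topology: `X̄ = ⋂_{j≥1} (X + M_j)`. -/
def clFil (Mf : ℕ → Submodule 𝕜 M) (X : Set M) : Set M :=
  {m | ∀ j : ℕ, 1 ≤ j → ∃ x ∈ X, m - x ∈ Mf j}

/-- `T^{(i)}(z) = {ξ(z) : ξ ∈ T ∩ End^{(i)}}`. -/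
def TOrbit (Mf : ℕ → Submodule 𝕜 M) (T : Submodule 𝕜 (Module.End 𝕜 M)) (i : ℕ)
    (z : M) : Set M :=
  {m | ∃ ξ : Module.End 𝕜 M, ξ ∈ T ∧ ξ ∈ EndS Mf i ∧ ξ z = m}

/-- `G^{(i)}z = {u(z) : u ∈ G ∩ GL^{(i)}}`. -/
def GOrbit (Mf : ℕ → Submodule 𝕜 M) (G : Subgroup (Module.End 𝕜 M)ˣ) (i : ℕ)
    (z : M) : Set M :=
  {m | ∃ u : (Module.End 𝕜 M)ˣ, u ∈ G ∧ u ∈ GLFil Mf i ∧ (u : Module.End 𝕜 M) z = m}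

/-- The pair `(T, G)` is pointwise of Lie type for the index `i`. -/
def IsPointwiseLie (Mf : ℕ → Submodule 𝕜 M) (T : Submodule 𝕜 (Module.End 𝕜 M))
    (G : Subgroup (Module.End 𝕜 M)ˣ) (i : ℕ) : Prop :=
  (∀ ξ : Module.End 𝕜 M, ξ ∈ T → ξ ∈ EndS Mf i → ∀ z : M,
    ∃ u : (Module.End 𝕜 M)ˣ, u ∈ G ∧ u ∈ GLFil Mf i ∧
      (ordM Mf (ξ z) < ⊤ →
        ordM Mf (((u : Module.End 𝕜 M) - 1 - ξ) z) > ordM Mf (ξ z))) ∧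
  (∀ u : (Module.End 𝕜 M)ˣ, u ∈ G → u ∈ GLFil Mf i → ∀ z : M,
    ∃ ξ : Module.End 𝕜 M, ξ ∈ T ∧ ξ ∈ EndS Mf i ∧
      (ordM Mf (((u : Module.End 𝕜 M) - 1) z) < ⊤ →
        ordM Mf (((u : Module.End 𝕜 M) - 1 - ξ) z)
          > ordM Mf (((u : Module.End 𝕜 M) - 1) z)))

/-- The pair `(T, G)` is pointwise of weak Lie type. -/
def IsPointwiseWeakLie (Mf : ℕ → Submodule 𝕜 M) (T : Submodule 𝕜 (Module.End 𝕜 M))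
    (G : Subgroup (Module.End 𝕜 M)ˣ) : Prop :=
  ∀ i : ℕ, 1 ≤ i →
    (∀ ξ : Module.End 𝕜 M, ξ ∈ T → ξ ∈ EndS Mf i → ∀ z : M,
      ∃ u : (Module.End 𝕜 M)ˣ, u ∈ G ∧ u ∈ GLFil Mf i ∧
        (ordM Mf (ξ z) < ⊤ →
          ordM Mf (((u : Module.End 𝕜 M) - 1 - ξ) z)
            ≥ 2 * ordE Mf ξ + ordM Mf z)) ∧
    (∀ u : (Module.End 𝕜 M)ˣ, u ∈ G → u ∈ GLFil Mf i → ∀ z : M,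
      ∃ ξ : Module.End 𝕜 M, ξ ∈ T ∧ ξ ∈ EndS Mf i ∧
        (ordM Mf (((u : Module.End 𝕜 M) - 1) z) < ⊤ →
          ordM Mf (((u : Module.End 𝕜 M) - 1 - ξ) z)
            ≥ 2 * ordE Mf ((u : Module.End 𝕜 M) - 1) + ordM Mf z))

section

variable {Mf : ℕ → Submodule 𝕜 M}

lemma mem_of_le_ordM (hMf : Antitone Mf) {x : M} {m : ℕ} (hm : m ≠ 0)
    (h : (m : ℕ∞) ≤ ordM Mf x) : x ∈ Mf m := by
  by_contra hx
  have hle : ordM Mf x ≤ ((m - 1 : ℕ) : ℕ∞) :=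
    iSup₂_le fun j hj => by
      have hjm : j < m := lt_of_not_ge fun hmj => hx (hMf hmj hj)
      exact_mod_cast Nat.le_sub_one_of_lt hjm
  have : m ≤ m - 1 := by exact_mod_cast h.trans hle
  omega

lemma le_ordE_of_mem_EndS {φ : Module.End 𝕜 M} {k : ℕ} (h : φ ∈ EndS Mf k) :
    (k : ℕ∞) ≤ ordE Mf φ :=
  le_iSup₂ (f := fun (i : ℕ) (_ : i ∈ {i : ℕ | φ ∈ EndS Mf i}) => (i : ℕ∞)) k h

lemma EndS_antitone (hMf : Antitone Mf) : Antitone (EndS Mf) :=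
  fun _ _ h _ hφ j x hx => hMf (Nat.add_le_add_left h j) (hφ j x hx)

variable {T : Submodule 𝕜 (Module.End 𝕜 M)} {G : Subgroup (Module.End 𝕜 M)ˣ}
  {z : M} {d k : ℕ}

lemma IsPointwiseWeakLie.exists_sub_one_sub_apply_mem (hMf : Antitone Mf)
    (hLie : IsPointwiseWeakLie Mf T G) (hz : (d : ℕ∞) ≤ ordM Mf z) (hk : 1 ≤ k)
    {u : (Module.End 𝕜 M)ˣ} (hu : u ∈ G) (huk : u ∈ GLFil Mf k) :
    ∃ ξ ∈ T, ξ ∈ EndS Mf k ∧ ((u : Module.End 𝕜 M) - 1 - ξ) z ∈ Mf (2 * k + d) := by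
  obtain ⟨ξ, hξT, hξk, hξ⟩ := (hLie k hk).2 u hu huk z
  have hlevel : 2 * k + d ≠ 0 := by omega
  by_cases hfin : ordM Mf (((u : Module.End 𝕜 M) - 1) z) < ⊤
  · refine ⟨ξ, hξT, hξk, mem_of_le_ordM hMf hlevel ?_⟩
    calc ((2 * k + d : ℕ) : ℕ∞) = 2 * (k : ℕ∞) + d := by push_cast; rfl
      _ ≤ 2 * ordE Mf ((u : Module.End 𝕜 M) - 1) + ordM Mf z :=
        add_le_add (mul_le_mul_right (le_ordE_of_mem_EndS huk.2.2.1) 2) hz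
      _ ≤ _ := hξ hfin
  · refine ⟨0, zero_mem T, zero_mem _, mem_of_le_ordM hMf hlevel ?_⟩
    rw [sub_zero, not_lt_top_iff.mp hfin]
    exact le_top

lemma IsPointwiseWeakLie.exists_sub_apply_mem (hMf : Antitone Mf)
    (hLie : IsPointwiseWeakLie Mf T G) (hz : (d : ℕ∞) ≤ ordM Mf z) (hk : 1 ≤ k) {w : M}
    (hw : z + w ∈ clFil Mf (GOrbit Mf G k z)) :
    ∃ ξ ∈ T, ξ ∈ EndS Mf k ∧ w - ξ z ∈ Mf (2 * k + d) := by
  obtain ⟨_, ⟨u, hu, huk, rfl⟩, hzw⟩ := hw (2 * k + d) (by omega)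
  obtain ⟨ξ, hξT, hξk, hξ⟩ := hLie.exists_sub_one_sub_apply_mem hMf hz hk hu huk
  refine ⟨ξ, hξT, hξk, ?_⟩
  have hsplit : w - ξ z = (z + w - (u : Module.End 𝕜 M) z)
      + ((u : Module.End 𝕜 M) - 1 - ξ) z := by
    simp only [LinearMap.sub_apply, Module.End.one_apply]
    abel
  exact hsplit ▸ add_mem hzw hξ

lemma IsPointwiseWeakLie.exists_sub_apply_mem_add (hMf : Antitone Mf)
    (hLie : IsPointwiseWeakLie Mf T G) (hz : (d : ℕ∞) ≤ ordM Mf z) {N : ℕ}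
    (hGz : ∀ k : ℕ, 1 ≤ k → ∀ w ∈ Mf (N + k + d), z + w ∈ clFil Mf (GOrbit Mf G k z))
    (hk : N < k) {w : M} (hw : w ∈ Mf (N + k + d)) (n : ℕ) :
    ∃ ξ ∈ T, ξ ∈ EndS Mf k ∧ w - ξ z ∈ Mf (N + k + n + d) := by
  induction n with
  | zero => exact ⟨0, zero_mem T, zero_mem _, by simpa using hw⟩
  | succ n ih =>
    obtain ⟨ξ₁, hξ₁T, hξ₁k, hr⟩ := ih
    have hr' : w - ξ₁ z ∈ Mf (N + (k + n) + d) := by rwa [← add_assoc N]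
    obtain ⟨ξ₂, hξ₂T, hξ₂k, hr₂⟩ :=
      hLie.exists_sub_apply_mem hMf hz (by omega) (hGz (k + n) (by omega) _ hr')
    refine ⟨ξ₁ + ξ₂, add_mem hξ₁T hξ₂T,
      add_mem hξ₁k (EndS_antitone hMf (Nat.le_add_right k n) hξ₂k), ?_⟩
    have hsplit : w - (ξ₁ + ξ₂) z = (w - ξ₁ z) - ξ₂ z := by
      rw [LinearMap.add_apply, sub_add_eq_sub_sub]
    exact hsplit ▸ hMf (by omega) hr₂

end

theorem statement11_general (Mf : ℕ → Submodule 𝕜 M) (hMf : Antitone Mf)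
    (G : Subgroup (Module.End 𝕜 M)ˣ)
    (T : Submodule 𝕜 (Module.End 𝕜 M))
    (hLie : IsPointwiseWeakLie Mf T G)
    (z : M) (d : ℕ) (hz : ordM Mf z = (d : ℕ∞)) (N : ℕ)
    (hGz : ∀ k : ℕ, 1 ≤ k → ∀ w ∈ Mf (N + k + d),
      z + w ∈ clFil Mf (GOrbit Mf G k z)) :
    ∀ k : ℕ, N < k → ↑(Mf (N + k + d)) ⊆ clFil Mf (TOrbit Mf T k z) := by
  intro k hk w hw j _
  obtain ⟨ξ, hξT, hξk, hr⟩ := hLie.exists_sub_apply_mem_add hMf hz.ge hGz hk hw j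
  exact ⟨ξ z, ⟨ξ, hξT, hξk, rfl⟩, hMf (by omega) hr⟩

/-- if the pair `(T, G^{(1)})` is pointwise of weak Lie type, `z ∈ M` has
finite order `d`, and for every `k ≥ 1` the closure of the orbit `G^{(k)}z` contains
`{z} + M_{N+k+d}`, then for every `k > N` the closure of `T^{(k)}(z)` contains
`M_{N+k+d}`. -/
theorem statement11 (Mf : ℕ → Submodule 𝕜 M) (hMf0 : Mf 0 = ⊤) (hMf : Antitone Mf)
    (G : Subgroup (Module.End 𝕜 M)ˣ)
    (hG : (G : Set (Module.End 𝕜 M)ˣ) ⊆ GLFil Mf 1)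
    (T : Submodule 𝕜 (Module.End 𝕜 M)) (hT : T ≤ EndS Mf 1)
    (hLie : IsPointwiseWeakLie Mf T G)
    (z : M) (d : ℕ) (hz : ordM Mf z = (d : ℕ∞)) (N : ℕ)
    (hGz : ∀ k : ℕ, 1 ≤ k → ∀ w ∈ Mf (N + k + d),
      z + w ∈ clFil Mf (GOrbit Mf G k z)) :
    ∀ k : ℕ, N < k → ↑(Mf (N + k + d)) ⊆ clFil Mf (TOrbit Mf T k z) :=
  statement11_general Mf hMf G T hLie z d hz N hGz
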